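/- Tikhonov rate under the variational inequality (Theorem 2, part 3): suppose Φ : [0,∞) → [0,∞) is a concave index function with J(x†) − J(x) ≤ Φ(‖A x − A x†‖) for all x ∈ X, and let Ψ(α) := sup_{t ≥ 0} (Φ(t) − t²/(2α)), assumed finite for each α > 0. Then there exists a constant C > 0 (independent of α and δ) such that for all α > 0 and δ > 0: |J(x†) − (1/α) T_α^δ(x_α^δ)| ≤ C (Ψ(α) + δ²/α). -/

import Mathlib

/-!
With `s := ‖A x_α^δ - y^δ‖`, the normalized value is `(1/α) T_α^δ(x_α^δ) = s²/(2α) + J(x_α^δ)`.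
Comparing with `x†` in the minimization gives `(1/α) T_α^δ(x_α^δ) ≤ J(x†) + δ²/(2α)`. Conversely,
the variational inequality, `‖A x_α^δ - A x†‖ ≤ s + δ` and the subadditivity of the concave `Φ`
give `J(x†) - (1/α) T_α^δ(x_α^δ) ≤ (Φ(s) - s²/(2α)) + (Φ(δ) - δ²/(2α)) + δ²/(2α)
≤ 2 Ψ(α) + δ²/(2α)`. Since `Ψ(α) ≥ Φ(0) = 0`, `C = 2` works.
-/

open Set

namespace ConcaveOn

variable {f : ℝ → ℝ}

lemma mul_le_map_mul (hf : ConcaveOn ℝ (Ici 0) f) (hf0 : 0 ≤ f 0) {t x : ℝ}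
    (ht₀ : 0 ≤ t) (ht₁ : t ≤ 1) (hx : 0 ≤ x) : t * f x ≤ f (t * x) := by
  have h := hf.2 (mem_Ici.2 hx) (mem_Ici.2 le_rfl) ht₀ (sub_nonneg.2 ht₁) (add_sub_cancel t 1)
  simp only [smul_eq_mul, mul_zero, add_zero] at h
  linarith [mul_nonneg (sub_nonneg.2 ht₁) hf0]

lemma map_add_le (hf : ConcaveOn ℝ (Ici 0) f) (hf0 : 0 ≤ f 0) {a b : ℝ}
    (ha : 0 ≤ a) (hb : 0 ≤ b) : f (a + b) ≤ f a + f b := by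
  rcases (add_nonneg ha hb).eq_or_lt with hab | hab
  · obtain rfl : a = 0 := by linarith
    obtain rfl : b = 0 := by linarith
    simpa using hf0
  have ha' := hf.mul_le_map_mul hf0 (div_nonneg ha hab.le) ((div_le_one hab).2 (by linarith))
    hab.le
  have hb' := hf.mul_le_map_mul hf0 (div_nonneg hb hab.le) ((div_le_one hab).2 (by linarith))
    hab.le
  rw [div_mul_cancel₀ _ hab.ne'] at ha' hb'
  calc f (a + b) = a / (a + b) * f (a + b) + b / (a + b) * f (a + b) := by
        field_simp
    _ ≤ f a + f b := add_le_add ha' hb'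

end ConcaveOn

section Tikhonov

variable {X H : Type*} [NormedAddCommGroup X] [NormedSpace ℝ X]
  [NormedAddCommGroup H] [NormedSpace ℝ H]

noncomputable def tikhonov (A : X →L[ℝ] H) (J : X → ℝ) (y : H) (α : ℝ) (x : X) : ℝ :=
  (1 / 2) * ‖A x - y‖ ^ 2 + α * J x

variable (A : X →L[ℝ] H) (J : X → ℝ) {y : H} {α δ : ℝ}

lemma one_div_mul_tikhonov (hα : α ≠ 0) (x : X) :
    (1 / α) * tikhonov A J y α x = ‖A x - y‖ ^ 2 / (2 * α) + J x := by
  unfold tikhonov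
  field_simp

lemma one_div_mul_tikhonov_le_of_forall_le {xdag xα : X} (hα : 0 < α)
    (hy : ‖A xdag - y‖ ≤ δ) (hmin : ∀ x, tikhonov A J y α xα ≤ tikhonov A J y α x) :
    (1 / α) * tikhonov A J y α xα ≤ J xdag + δ ^ 2 / (2 * α) := by
  have hdag : (1 / α) * tikhonov A J y α xdag ≤ J xdag + δ ^ 2 / (2 * α) := by
    rw [one_div_mul_tikhonov A J hα.ne', add_comm]
    gcongr
  exact (mul_le_mul_of_nonneg_left (hmin xdag) (by positivity)).trans hdag

lemma sub_one_div_mul_tikhonov_le {Φ : ℝ → ℝ} (hΦconc : ConcaveOn ℝ (Ici 0) Φ)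
    (hΦmono : MonotoneOn Φ (Ici 0)) (hΦ0 : 0 ≤ Φ 0) {xdag : X}
    (hvar : ∀ x : X, J xdag - J x ≤ Φ ‖A x - A xdag‖) {M : ℝ}
    (hM : ∀ t, 0 ≤ t → Φ t - t ^ 2 / (2 * α) ≤ M) (hα : 0 < α)
    (hy : ‖A xdag - y‖ ≤ δ) (x : X) :
    J xdag - (1 / α) * tikhonov A J y α x ≤ 2 * M + δ ^ 2 / (2 * α) := by
  set s := ‖A x - y‖
  have hδ : 0 ≤ δ := (norm_nonneg _).trans hy
  have hdist : ‖A x - A xdag‖ ≤ s + δ :=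
    (norm_sub_le_norm_sub_add_norm_sub _ y _).trans (by rw [norm_sub_rev y]; gcongr)
  have hJ : J xdag - J x ≤ Φ s + Φ δ :=
    calc J xdag - J x ≤ Φ ‖A x - A xdag‖ := hvar x
      _ ≤ Φ (s + δ) := hΦmono (norm_nonneg _) (add_nonneg (norm_nonneg _) hδ) hdist
      _ ≤ Φ s + Φ δ := hΦconc.map_add_le hΦ0 (norm_nonneg _) hδ
  rw [one_div_mul_tikhonov A J hα.ne']
  linarith [hM s (norm_nonneg _), hM δ hδ]

end Tikhonov

theorem stmt13_general {X H : Type*} [NormedAddCommGroup X] [NormedSpace ℝ X]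
    [NormedAddCommGroup H] [InnerProductSpace ℝ H]
    (A : X →L[ℝ] H) (J : X → ℝ) (xdag : X)
    (Φ : ℝ → ℝ) (hΦconc : ConcaveOn ℝ (Set.Ici 0) Φ)
    (hΦmono : MonotoneOn Φ (Set.Ici 0)) (hΦ0 : Φ 0 = 0)
    (hvar : ∀ x : X, J xdag - J x ≤ Φ ‖A x - A xdag‖)
    (Ψ : ℝ → ℝ)
    (hbdd : ∀ α > 0, BddAbove ((fun t => Φ t - t ^ 2 / (2 * α)) '' Set.Ici 0))
    (hΨ : ∀ α > 0, Ψ α = sSup ((fun t => Φ t - t ^ 2 / (2 * α)) '' Set.Ici 0)) :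
    ∃ C > 0, ∀ α > 0, ∀ δ > 0, ∀ yδ : H, ‖A xdag - yδ‖ ≤ δ →
      ∀ xad : X,
        (∀ x, (1 / 2) * ‖A xad - yδ‖ ^ 2 + α * J xad ≤
          (1 / 2) * ‖A x - yδ‖ ^ 2 + α * J x) →
        |J xdag - (1 / α) * ((1 / 2) * ‖A xad - yδ‖ ^ 2 + α * J xad)| ≤
          C * (Ψ α + δ ^ 2 / α) := by
  refine ⟨2, two_pos, fun α hα δ _ yδ hy xad hmin => ?_⟩
  have hΨle : ∀ t, 0 ≤ t → Φ t - t ^ 2 / (2 * α) ≤ Ψ α := fun t ht =>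
    hΨ α hα ▸ le_csSup (hbdd α hα) ⟨t, ht, rfl⟩
  have hΨ_nonneg : 0 ≤ Ψ α := by simpa [hΦ0] using hΨle 0 le_rfl
  have hupper := one_div_mul_tikhonov_le_of_forall_le A J hα hy hmin
  have hlower := sub_one_div_mul_tikhonov_le A J hΦconc hΦmono hΦ0.ge hvar hΨle hα hy xad
  have hhalf : δ ^ 2 / (2 * α) ≤ δ ^ 2 / α := by gcongr; linarith
  unfold tikhonov at hupper hlower
  rw [abs_le]
  constructor <;> linarith [div_nonneg (sq_nonneg δ) hα.le]

/-- Theorem 2, part 3 (Tikhonov rate): under the variational inequality with a concave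
index function `Φ` and with `Ψ(α) = sup_{t ≥ 0} (Φ(t) − t²/(2α))` (assumed finite), there
is a constant `C > 0` such that for all `α, δ > 0` and every minimizer `x_α^δ` of the
noisy Tikhonov functional `T_α^δ`,
`|J(x†) − (1/α) T_α^δ(x_α^δ)| ≤ C (Ψ(α) + δ²/α)`. -/
theorem stmt13 {X H : Type*} [NormedAddCommGroup X] [NormedSpace ℝ X] [CompleteSpace X]
    [NormedAddCommGroup H] [InnerProductSpace ℝ H] [CompleteSpace H]
    (A : X →L[ℝ] H) (J : X → ℝ) (hJ : ConvexOn ℝ Set.univ J) (xdag : X)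
    (Φ : ℝ → ℝ) (hΦconc : ConcaveOn ℝ (Set.Ici 0) Φ)
    (hΦmono : MonotoneOn Φ (Set.Ici 0)) (hΦnn : ∀ t ≥ 0, 0 ≤ Φ t) (hΦ0 : Φ 0 = 0)
    (hΦcont0 : ContinuousWithinAt Φ (Set.Ici 0) 0)
    (hvar : ∀ x : X, J xdag - J x ≤ Φ ‖A x - A xdag‖)
    (Ψ : ℝ → ℝ)
    (hbdd : ∀ α > 0, BddAbove ((fun t => Φ t - t ^ 2 / (2 * α)) '' Set.Ici 0))
    (hΨ : ∀ α > 0, Ψ α = sSup ((fun t => Φ t - t ^ 2 / (2 * α)) '' Set.Ici 0)) :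
    ∃ C > 0, ∀ α > 0, ∀ δ > 0, ∀ yδ : H, ‖A xdag - yδ‖ ≤ δ →
      ∀ xad : X,
        (∀ x, (1 / 2) * ‖A xad - yδ‖ ^ 2 + α * J xad ≤
          (1 / 2) * ‖A x - yδ‖ ^ 2 + α * J x) →
        |J xdag - (1 / α) * ((1 / 2) * ‖A xad - yδ‖ ^ 2 + α * J xad)| ≤
          C * (Ψ α + δ ^ 2 / α) :=
  stmt13_general A J xdag Φ hΦconc hΦmono hΦ0 hvar Ψ hbdd hΨ
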